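/- arXiv:1903.12082 — 5 statements merged into one kernel-verified Lean document; each statement's English description precedes it below -/
import Mathlib

section
/- Let R be a finite set of positive integers with min(R) = m ≥ 2 and max(R) = M, and let G be a fixed graph. Then for every positive integer n, êx_R(n,G) ≤ (C(M,2)/C(m,2)) · êx_m(n,G), where C(a,2) = a(a−1)/2 denotes the binomial coefficient. -/
/-- A hypergraph `H` (given by its finite collection of hyperedges on vertex type `β`)
contains a Berge copy of the graph `G`: there is an injection of the vertices of `G`
and an injection of the edges of `G` into hyperedges of `H` such that each edge of `G`
is contained in its corresponding hyperedge. -/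
def HasBergeCopy {α β : Type*} [DecidableEq β] (G : SimpleGraph α)
    (H : Finset (Finset β)) : Prop :=
  ∃ (i : α → β) (f : Sym2 α → Finset β),
    Function.Injective i ∧ Set.InjOn f G.edgeSet ∧
    (∀ e ∈ G.edgeSet, f e ∈ H) ∧
    (∀ u v, G.Adj u v → i u ∈ f s(u, v) ∧ i v ∈ f s(u, v))

/-- The edge set of the shadow graph of a hypergraph `H`: all 2-element subsets of
vertices covered by some hyperedge of `H`. -/
def covPairs {β : Type*} [DecidableEq β] (H : Finset (Finset β)) : Finset (Finset β) :=
  H.biUnion fun h => Finset.powersetCard 2 h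

/-- The `R`-cover Turán number `êx_R(n, G)`: the maximum number of edges in the shadow
of a Berge-`G`-free `R`-graph on `n` vertices. -/
noncomputable def coverTuranNumber {α : Type*} (R : Set ℕ) (n : ℕ)
    (G : SimpleGraph α) : ℕ :=
  sSup { m | ∃ H : Finset (Finset (Fin n)),
    (∀ h ∈ H, h.card ∈ R) ∧ ¬ HasBergeCopy G H ∧ m = (covPairs H).card }

/-!
Assign every pair of the shadow of a Berge-`G`-free `R`-graph `H` to one hyperedge containing
it. A uniformly random `m`-subset of a hyperedge `h` contains a given pair of `h` with
probability `C(m,2)/C(#h,2) ≥ C(m,2)/C(M,2)`, so some `m`-subset of `h` keeps at least that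
fraction of the pairs assigned to `h`. Replacing every hyperedge by such a subset gives an
`m`-graph whose shadow is at least `C(m,2)/C(M,2)` times as large, and which is still
Berge-`G`-free, since a Berge copy in it lifts to `H` through the shrunken hyperedges.
-/

open Finset

lemma HasBergeCopy.of_image {α β : Type*} [DecidableEq β] {G : SimpleGraph α}
    {H : Finset (Finset β)} {σ : Finset β → Finset β} (hσ : ∀ h ∈ H, σ h ⊆ h)
    (hG : HasBergeCopy G (H.image σ)) : HasBergeCopy G H := by
  obtain ⟨i, f, hi, hf, hfH, hif⟩ := hG
  have hpre : ∀ e ∈ H.image σ, ∃ h ∈ H, σ h = e := fun e he => mem_image.1 he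
  choose! g hgH hgσ using hpre
  have hsub : ∀ e ∈ G.edgeSet, f e ⊆ g (f e) := fun e he => by
    simpa only [hgσ _ (hfH e he)] using hσ _ (hgH _ (hfH e he))
  refine ⟨i, g ∘ f, hi, fun e he e' he' hee' => hf he he' ?_, fun e he => hgH _ (hfH e he),
    fun u v huv => ?_⟩
  · rw [← hgσ _ (hfH e he), ← hgσ _ (hfH e' he')]
    exact congrArg σ hee'
  · exact ⟨hsub _ huv (hif u v huv).1, hsub _ huv (hif u v huv).2⟩

lemma sum_card_powersetCard_inter {β : Type*} [DecidableEq β] {h : Finset β}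
    {D : Finset (Finset β)} {t : ℕ} (hD : D ⊆ h.powersetCard t) (k : ℕ) (htk : t ≤ k) :
    ∑ s ∈ h.powersetCard k, #(s.powersetCard t ∩ D) = #D * (#h - t).choose (k - t) := by
  have hfilter : ∀ s : Finset β, s.powersetCard t ∩ D = {p ∈ D | p ⊆ s} := by
    intro s
    ext p
    simp only [mem_inter, mem_filter, mem_powersetCard]
    exact ⟨fun ⟨⟨hps, _⟩, hpD⟩ => ⟨hpD, hps⟩,
      fun ⟨hpD, hps⟩ => ⟨⟨hps, (mem_powersetCard.1 (hD hpD)).2⟩, hpD⟩⟩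
  calc ∑ s ∈ h.powersetCard k, #(s.powersetCard t ∩ D)
      = ∑ s ∈ h.powersetCard k, #(D.bipartiteBelow (· ⊆ ·) s) :=
        sum_congr rfl fun s _ => congrArg card (hfilter s)
    _ = ∑ p ∈ D, #((h.powersetCard k).bipartiteAbove (· ⊆ ·) p) :=
        (sum_card_bipartiteAbove_eq_sum_card_bipartiteBelow _).symm
    _ = #D * (#h - t).choose (k - t) := by
        refine sum_const_nat fun p hp => ?_
        obtain ⟨hph, hpt⟩ := mem_powersetCard.1 (hD hp)
        rw [bipartiteAbove, card_filter_powersetCard_subset p h k hph (hpt ▸ htk), hpt]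

lemma exists_powersetCard_choose_mul_card_le {β : Type*} [DecidableEq β] {h : Finset β}
    {D : Finset (Finset β)} {t m M : ℕ} (hD : D ⊆ h.powersetCard t) (htm : t ≤ m)
    (hmh : m ≤ #h) (hhM : #h ≤ M) :
    ∃ s ∈ h.powersetCard m, m.choose t * #D ≤ M.choose t * #(s.powersetCard t ∩ D) := by
  have hsum : ∑ _s ∈ h.powersetCard m, m.choose t * #D
      = ∑ s ∈ h.powersetCard m, (#h).choose t * #(s.powersetCard t ∩ D) := by
    rw [sum_const, ← mul_sum, sum_card_powersetCard_inter hD m htm, card_powersetCard,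
      smul_eq_mul, ← mul_assoc, Nat.choose_mul htm]
    ring
  obtain ⟨s, hs, hle⟩ := exists_le_of_sum_le (powersetCard_nonempty.2 hmh) hsum.le
  exact ⟨s, hs, hle.trans (Nat.mul_le_mul_right _ (Nat.choose_le_choose t hhM))⟩

lemma exists_shrink_choose_two_mul_card_covPairs_le {β : Type*} [DecidableEq β] {m M : ℕ}
    (hm : 2 ≤ m) {H : Finset (Finset β)} (hH : ∀ h ∈ H, m ≤ #h ∧ #h ≤ M) :
    ∃ σ : Finset β → Finset β, (∀ h ∈ H, σ h ⊆ h ∧ #(σ h) = m) ∧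
      m.choose 2 * #(covPairs H) ≤ M.choose 2 * #(covPairs (H.image σ)) := by
  have howner : ∀ p ∈ covPairs H, ∃ h ∈ H, p ∈ h.powersetCard 2 := fun p hp =>
    mem_biUnion.1 hp
  choose! o hoH hpo using howner
  set D : Finset β → Finset (Finset β) := fun h => {p ∈ covPairs H | o p = h}
  have hD : ∀ h, D h ⊆ h.powersetCard 2 := fun h p hp => by
    obtain ⟨hpH, rfl⟩ := mem_filter.1 hp
    exact hpo p hpH
  have hchoice : ∀ h ∈ H, ∃ s ∈ h.powersetCard m,
      m.choose 2 * #(D h) ≤ M.choose 2 * #(s.powersetCard 2 ∩ D h) := fun h hh =>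
    exists_powersetCard_choose_mul_card_le (hD h) hm (hH h hh).1 (hH h hh).2
  choose! σ hσ hσD using hchoice
  refine ⟨σ, fun h hh => mem_powersetCard.1 (hσ h hh), ?_⟩
  have hdisj : (H : Set (Finset β)).PairwiseDisjoint fun h => (σ h).powersetCard 2 ∩ D h :=
    fun h _ h' _ hne => disjoint_left.2 fun p hp hp' =>
      hne ((mem_filter.1 (mem_inter.1 hp).2).2.symm.trans (mem_filter.1 (mem_inter.1 hp').2).2)
  have hcover : H.biUnion (fun h => (σ h).powersetCard 2 ∩ D h) ⊆ covPairs (H.image σ) := by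
    intro p hp
    obtain ⟨h, hh, hp⟩ := mem_biUnion.1 hp
    exact mem_biUnion.2 ⟨σ h, mem_image_of_mem σ hh, (mem_inter.1 hp).1⟩
  calc m.choose 2 * #(covPairs H) = ∑ h ∈ H, m.choose 2 * #(D h) := by
        rw [card_eq_sum_card_fiberwise hoH, mul_sum]
    _ ≤ ∑ h ∈ H, M.choose 2 * #((σ h).powersetCard 2 ∩ D h) := sum_le_sum hσD
    _ = M.choose 2 * #(H.biUnion fun h => (σ h).powersetCard 2 ∩ D h) := by
        rw [card_biUnion hdisj, mul_sum]
    _ ≤ M.choose 2 * #(covPairs (H.image σ)) := Nat.mul_le_mul_left _ (card_le_card hcover)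

lemma card_covPairs_le {β : Type*} [Fintype β] [DecidableEq β] (H : Finset (Finset β)) :
    #(covPairs H) ≤ (Fintype.card β).choose 2 := by
  rw [← card_univ, ← card_powersetCard]
  exact card_le_card (biUnion_subset.2 fun h _ => powersetCard_mono (subset_univ h))

section coverTuranNumber

variable {α : Type*} {G : SimpleGraph α} {R : Set ℕ} {n : ℕ}

lemma bddAbove_coverTuranNumber_set :
    BddAbove {v | ∃ H : Finset (Finset (Fin n)),
      (∀ h ∈ H, #h ∈ R) ∧ ¬ HasBergeCopy G H ∧ v = #(covPairs H)} := by
  refine ⟨n.choose 2, ?_⟩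
  rintro _ ⟨H, -, -, rfl⟩
  simpa using card_covPairs_le H

lemma card_covPairs_le_coverTuranNumber {H : Finset (Finset (Fin n))} (hR : ∀ h ∈ H, #h ∈ R)
    (hG : ¬ HasBergeCopy G H) : #(covPairs H) ≤ coverTuranNumber R n G :=
  le_csSup bddAbove_coverTuranNumber_set ⟨H, hR, hG, rfl⟩

lemma mul_coverTuranNumber_le {a b : ℕ}
    (hH : ∀ H : Finset (Finset (Fin n)), (∀ h ∈ H, #h ∈ R) → ¬ HasBergeCopy G H →
      a * #(covPairs H) ≤ b) :
    a * coverTuranNumber R n G ≤ b := by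
  rw [coverTuranNumber]
  rcases Set.eq_empty_or_nonempty {v | ∃ H : Finset (Finset (Fin n)),
      (∀ h ∈ H, #h ∈ R) ∧ ¬ HasBergeCopy G H ∧ v = #(covPairs H)} with hempty | hne
  · simp [hempty]
  · obtain ⟨H, hR, hG, hv⟩ := Nat.sSup_mem hne bddAbove_coverTuranNumber_set
    exact hv ▸ hH H hR hG

end coverTuranNumber

theorem stmt1_general {α : Type*} (G : SimpleGraph α)
    (R : Finset ℕ) (hR : R.Nonempty) (m M : ℕ)
    (hm : R.min' hR = m) (hM : R.max' hR = M) (hm2 : 2 ≤ m) :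
    ∀ n : ℕ, 0 < n →
      (coverTuranNumber (↑R : Set ℕ) n G : ℝ) ≤
        ((M.choose 2 : ℝ) / (m.choose 2 : ℝ)) * (coverTuranNumber {m} n G : ℝ) := by
  intro n _
  have hm0 : (0 : ℝ) < m.choose 2 := by exact_mod_cast Nat.choose_pos hm2
  rw [div_mul_eq_mul_div, le_div_iff₀ hm0, mul_comm]
  refine mod_cast mul_coverTuranNumber_le fun H hHR hG => ?_
  have hsize : ∀ h ∈ H, m ≤ #h ∧ #h ≤ M := fun h hh =>
    ⟨hm ▸ R.min'_le _ (hHR h hh), hM ▸ R.le_max' _ (hHR h hh)⟩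
  obtain ⟨σ, hσ, hle⟩ := exists_shrink_choose_two_mul_card_covPairs_le hm2 hsize
  refine hle.trans (Nat.mul_le_mul_left _ (card_covPairs_le_coverTuranNumber ?_ ?_))
  · simpa using fun h hh => (hσ h hh).2
  · exact fun hG' => hG (hG'.of_image fun h hh => (hσ h hh).1)

theorem stmt1 {α : Type*} [Fintype α] (G : SimpleGraph α)
    (R : Finset ℕ) (hR : R.Nonempty) (m M : ℕ)
    (hm : R.min' hR = m) (hM : R.max' hR = M) (hm2 : 2 ≤ m) :
    ∀ n : ℕ, 0 < n →
      (coverTuranNumber (↑R : Set ℕ) n G : ℝ) ≤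
        ((M.choose 2 : ℝ) / (m.choose 2 : ℝ)) * (coverTuranNumber {m} n G : ℝ) :=
  stmt1_general G R hR m M hm hM hm2
end

section
/- Let k ≥ 2 and let G be a graph with χ(G) ≥ k + 1; set t = χ(G) − 1. Let V be a vertex set partitioned into t nonempty parts V = V₁ ∪ ⋯ ∪ V_t, and let H be the k-uniform hypergraph on V whose edges are exactly the k-element subsets of V intersecting each part V_i in at most one vertex. Then H is Berge-G-free, and the shadow ∂(H) is the complete t-partite graph with parts V₁, …, V_t (provided each part has at least k − 1 vertices so that every crossing pair lies in some edge). -/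
theorem stmt3 {V α : Type*} [Fintype V] [DecidableEq V] [Fintype α]
    (k t : ℕ) (hk : 2 ≤ k) (G : SimpleGraph α)
    (χ : ℕ) (hχ : G.chromaticNumber = (χ : ℕ∞)) (hkχ : k + 1 ≤ χ) (ht : t = χ - 1)
    (P : V → Fin t)
    (hparts : ∀ i : Fin t, k - 1 ≤ (Finset.univ.filter fun v => P v = i).card) :
    ¬ HasBergeCopy G
        ((Finset.powersetCard k (Finset.univ : Finset V)).filter
          (fun h => ∀ i : Fin t, (h.filter fun v => P v = i).card ≤ 1)) ∧
      covPairs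
          ((Finset.powersetCard k (Finset.univ : Finset V)).filter
            (fun h => ∀ i : Fin t, (h.filter fun v => P v = i).card ≤ 1)) =
        (Finset.powersetCard 2 (Finset.univ : Finset V)).filter
          (fun e => (e.image P).card = 2) := by
  classical
  set H := ((Finset.powersetCard k (Finset.univ : Finset V)).filter
      (fun h => ∀ i : Fin t, (h.filter fun v => P v = i).card ≤ 1)) with hH
  have htk : k ≤ t := by omega
  have key : ∀ h ∈ H, ∀ u ∈ h, ∀ v ∈ h, u ≠ v → P u ≠ P v := by
    intro h hh u hu v hv huv hP
    rw [hH, Finset.mem_filter] at hh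
    have h1 := hh.2 (P u)
    have : ({u, v} : Finset V) ⊆ h.filter fun w => P w = P u := by
      intro x hx
      simp only [Finset.mem_insert, Finset.mem_singleton] at hx
      rcases hx with rfl | rfl <;> simp [Finset.mem_filter, hu, hv, hP]
    have h2 : ({u, v} : Finset V).card = 2 := Finset.card_pair huv
    have := Finset.card_le_card this
    omega
  constructor
  · rintro ⟨i, f, hi, hf, hfH, hadj⟩
    have hcol : ∀ u v : α, G.Adj u v → P (i u) ≠ P (i v) := by
      intro u v huv
      have he : s(u, v) ∈ G.edgeSet := by simpa using huv
      have hmem : f s(u, v) ∈ H := hfH _ he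
      obtain ⟨h1, h2⟩ := hadj u v huv
      exact key _ hmem _ h1 _ h2 (fun hiuv => (G.ne_of_adj huv) (hi hiuv))
    have hcolor : G.Colorable t :=
      ⟨⟨fun v => P (i v), fun {u v} huv => hcol u v huv⟩⟩
    have hle := hcolor.chromaticNumber_le
    rw [hχ] at hle
    have : χ ≤ t := by exact_mod_cast hle
    omega
  · ext e
    simp only [covPairs, Finset.mem_biUnion, Finset.mem_filter,
      Finset.mem_powersetCard]
    constructor
    · rintro ⟨h, hh, heh, he2⟩
      refine ⟨⟨Finset.subset_univ e, he2⟩, ?_⟩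
      have hinj : Set.InjOn P e := by
        intro x hx y hy hP
        by_contra hxy
        exact key h hh x (heh hx) y (heh hy) hxy hP
      rw [Finset.card_image_of_injOn hinj, he2]
    · rintro ⟨⟨-, he2⟩, himg⟩
      obtain ⟨a, b, hab, rfl⟩ := Finset.card_eq_two.mp he2
      have hPab : P a ≠ P b := by
        intro hP
        rw [Finset.image_insert, Finset.image_singleton, hP,
          Finset.insert_eq_self.mpr (Finset.mem_singleton_self _)] at himg
        simp at himg
      -- choose representatives of parts
      have hrep : ∀ i : Fin t, ∃ v : V, P v = i := by
        intro i
        have := hparts i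
        have hpos : 0 < (Finset.univ.filter fun v => P v = i).card := by omega
        obtain ⟨v, hv⟩ := Finset.card_pos.mp hpos
        exact ⟨v, (Finset.mem_filter.mp hv).2⟩
      choose rep hrepP using hrep
      have hrepinj : Function.Injective rep := fun i j hij => by
        rw [← hrepP i, ← hrepP j, hij]
      -- choose k-2 parts avoiding P a, P b
      have hcd : k - 2 ≤ ((Finset.univ : Finset (Fin t)) \ {P a, P b}).card := by
        have h2 : ({P a, P b} : Finset (Fin t)).card = 2 := Finset.card_pair hPab
        rw [Finset.card_sdiff_of_subset (Finset.subset_univ _), h2, Finset.card_univ,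
          Fintype.card_fin]
        omega
      obtain ⟨S, hSsub, hScard⟩ := Finset.exists_subset_card_eq hcd
      set h : Finset V := insert a (insert b (S.image rep)) with hdefh
      have hPrep : ∀ x ∈ S.image rep, P x ≠ P a ∧ P x ≠ P b := by
        intro x hx
        obtain ⟨j, hj, rfl⟩ := Finset.mem_image.mp hx
        have := hSsub hj
        rw [Finset.mem_sdiff, Finset.mem_insert, Finset.mem_singleton] at this
        rw [hrepP j]
        push_neg at this
        exact this.2
      have hanotin : a ∉ insert b (S.image rep) := by
        simp only [Finset.mem_insert]
        rintro (rfl | hx)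
        · exact hPab rfl
        · exact (hPrep a hx).1 rfl
      have hbnotin : b ∉ S.image rep := fun hx => (hPrep b hx).2 rfl
      have hcard : h.card = k := by
        rw [hdefh, Finset.card_insert_of_notMem hanotin,
          Finset.card_insert_of_notMem hbnotin,
          Finset.card_image_of_injective _ hrepinj, hScard]
        omega
      have hPinjh : Set.InjOn P ↑h := by
        intro x hx y hy hP
        simp only [hdefh, Finset.coe_insert, Set.mem_insert_iff,
          Finset.mem_coe] at hx hy
        rcases hx with rfl | rfl | hx <;> rcases hy with rfl | rfl | hy
        · rfl
        · exact absurd hP hPab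
        · exact absurd hP.symm (hPrep y hy).1
        · exact absurd hP.symm hPab
        · rfl
        · exact absurd hP.symm (hPrep y hy).2
        · exact absurd hP (hPrep x hx).1
        · exact absurd hP (hPrep x hx).2
        · obtain ⟨jx, hjx, rfl⟩ := Finset.mem_image.mp hx
          obtain ⟨jy, hjy, rfl⟩ := Finset.mem_image.mp hy
          rw [hrepP, hrepP] at hP
          rw [hP]
      refine ⟨h, ?_, ?_, he2⟩
      · rw [hH, Finset.mem_filter, Finset.mem_powersetCard]
        refine ⟨⟨Finset.subset_univ _, hcard⟩, ?_⟩
        intro i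
        rw [Finset.card_le_one]
        intro x hx y hy
        rw [Finset.mem_filter] at hx hy
        exact hPinjh hx.1 hy.1 (hx.2.trans hy.2.symm)
      · intro x hx
        simp only [Finset.mem_insert, Finset.mem_singleton] at hx
        rcases hx with rfl | rfl <;> simp [hdefh]
end

section
/- For all integers t ≥ s ≥ 2, there exist constants c₁, c₂ > 0 and n₀ such that for all n ≥ n₀, c₁ · ex(n,K_{s,t}) ≤ êx_3(n,K_{s,t}) ≤ c₂ · ex(n,K_{s,t}), where K_{s,t} is the complete bipartite graph with parts of sizes s and t. -/
/-- The classical Turán number `ex(n, G)`: the maximum number of edges of a simple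
graph on `n` vertices containing no subgraph isomorphic to `G`. -/
noncomputable def turanNumber {α : Type*} (n : ℕ) (G : SimpleGraph α) : ℕ :=
  sSup { m | ∃ F : SimpleGraph (Fin n),
    ¬ (∃ f : G →g F, Function.Injective f) ∧ m = F.edgeSet.ncard }

/-!
Upper bound: greedily give the hyperedges distinct pairs they contain, so that a hyperedge left
without a pair has all its pairs taken by others. A copy of `G` in the graph `S` of chosen pairs
would be a Berge copy of `G`, so `|S| ≤ ex(n, G)`; every shadow pair lies in `S` or in one of the
`|S|` represented hyperedges, so the shadow has at most `4 |S|` edges.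

Lower bound: from an extremal `K_{s,t}`-free graph `F` on `⌊n/3⌋` vertices take the 3-graph on
`V(F) × {0, 1, 2}` with a hyperedge `{(u,0), (u,1), (v,2)}` for every ordered edge `(u, v)`. Its
shadow contains the `2 e(F)` pairs `(u,0)(v,2)`. As `s, t ≥ 2`, every edge of a Berge copy of
`K_{s,t}` must join layer `2` to a lower layer, and then forgetting the layer gives a copy of
`K_{s,t}` in `F`. Finally `ex(n) / C(n, 2)` is non-increasing, so `ex(n) ≤ 28 ex(⌊n/3⌋)`.
-/

open Finset Function SimpleGraph

section Numbers

variable {α : Type*} {n : ℕ} {G : SimpleGraph α}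

lemma free_iff_not_exists_injective_hom {β : Type*} {F : SimpleGraph β} :
    G.Free F ↔ ¬ ∃ f : G →g F, Injective f :=
  not_congr ⟨fun ⟨c⟩ => ⟨c.toHom, c.injective⟩, fun ⟨f, hf⟩ => ⟨f.toCopy hf⟩⟩

theorem turanNumber_eq_extremalNumber (n : ℕ) (G : SimpleGraph α) :
    turanNumber n G = extremalNumber n G := by
  classical
  have hub : ∀ m ∈ { m | ∃ F : SimpleGraph (Fin n),
      ¬ (∃ f : G →g F, Injective f) ∧ m = F.edgeSet.ncard }, m ≤ extremalNumber n G := by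
    rintro _ ⟨F, hF, rfl⟩
    rw [← coe_edgeFinset, Set.ncard_coe_finset]
    simpa using card_edgeFinset_le_extremalNumber (free_iff_not_exists_injective_hom.2 hF)
  refine le_antisymm (csSup_le' hub) ?_
  simpa using (extremalNumber_le_iff (V := Fin n) G (turanNumber n G)).2 fun F _ hF =>
    le_csSup ⟨_, hub⟩ ⟨F, free_iff_not_exists_injective_hom.1 hF, by
      rw [← coe_edgeFinset, Set.ncard_coe_finset]⟩

lemma le_coverTuranNumber {R : Set ℕ} {H : Finset (Finset (Fin n))}
    (hR : ∀ h ∈ H, h.card ∈ R) (hH : ¬ HasBergeCopy G H) :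
    (covPairs H).card ≤ coverTuranNumber R n G :=
  le_csSup ⟨Fintype.card (Finset (Fin n)), by rintro _ ⟨H, -, -, rfl⟩; exact card_le_univ _⟩
    ⟨H, hR, hH, rfl⟩

end Numbers

section Relabel

variable {α β γ : Type*} [DecidableEq β] [DecidableEq γ]

lemma covPairs_image_map (E : β ↪ γ) (H : Finset (Finset β)) :
    covPairs (H.image (map E)) = (covPairs H).map (mapEmbedding E).toEmbedding := by
  ext q
  simp only [covPairs, image_biUnion, powersetCard_map, mem_biUnion, mem_map]
  exact ⟨fun ⟨h, hh, q', hq', hq⟩ => ⟨q', ⟨h, hh, hq'⟩, hq⟩,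
    fun ⟨q', ⟨h, hh, hq'⟩, hq⟩ => ⟨h, hh, q', hq', hq⟩⟩

lemma HasBergeCopy.of_image_map {G : SimpleGraph α} (hG : ∀ a, ∃ b, G.Adj a b) (E : β ↪ γ)
    {H : Finset (Finset β)} (h : HasBergeCopy G (H.image (map E))) : HasBergeCopy G H := by
  obtain ⟨i, f, hi, hf, hfH, hif⟩ := h
  have hrange : ∀ a, ∃ p, E p = i a := by
    intro a
    obtain ⟨b, hab⟩ := hG a
    obtain ⟨h, -, hh⟩ := mem_image.1 (hfH s(a, b) hab)
    obtain ⟨p, -, hp⟩ := mem_map.1 (hh ▸ (hif a b hab).1)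
    exact ⟨p, hp⟩
  choose p hp using hrange
  have hpre : ∀ x ∈ G.edgeSet, (f x).preimage E E.injective.injOn ∈ H ∧
      ((f x).preimage E E.injective.injOn).map E = f x := by
    intro x hx
    obtain ⟨h, hh, hfx⟩ := mem_image.1 (hfH x hx)
    rw [← hfx, preimage_map]
    exact ⟨hh, rfl⟩
  refine ⟨p, fun x => (f x).preimage E E.injective.injOn,
    fun a b hab => hi ?_, fun x hx y hy hxy => hf hx hy ?_, fun x hx => (hpre x hx).1,
    fun a b hab => ?_⟩
  · rw [← hp a, ← hp b, hab]
  · rw [← (hpre x hx).2, ← (hpre y hy).2]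
    exact congrArg (map E) hxy
  · simp only [mem_preimage, hp]
    exact hif a b hab

end Relabel

section UpperBound

variable {α β : Type*} [DecidableEq β] {G : SimpleGraph α}

lemma covPairs_subset_of_representatives {H S : Finset (Finset β)} {φ : Finset β → Finset β}
    (hcov : ∀ h ∈ H, h ∈ S.image φ ∨ h.powersetCard 2 ⊆ S) :
    covPairs H ⊆ S ∪ S.biUnion fun p => (φ p).powersetCard 2 := by
  intro q hq
  obtain ⟨h, hh, hqh⟩ := mem_biUnion.1 hq
  rcases hcov h hh with hφ | hS
  · obtain ⟨p, hp, rfl⟩ := mem_image.1 hφ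
    exact mem_union_right _ (mem_biUnion.2 ⟨p, hp, hqh⟩)
  · exact mem_union_left _ (hS hqh)

lemma exists_injOn_pair_representatives (H : Finset (Finset β)) :
    ∃ (S : Finset (Finset β)) (φ : Finset β → Finset β),
      (∀ p ∈ S, p.card = 2 ∧ p ⊆ φ p ∧ φ p ∈ H) ∧ Set.InjOn φ S ∧
      ∀ h ∈ H, h ∈ S.image φ ∨ h.powersetCard 2 ⊆ S := by
  induction H using Finset.induction_on with
  | empty => exact ⟨∅, id, by simp, by simp, by simp⟩
  | insert h₀ H hh₀ ih =>
    obtain ⟨S, φ, hS, hinj, hcov⟩ := ih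
    have hSH : ∀ p ∈ S, p.card = 2 ∧ p ⊆ φ p ∧ φ p ∈ insert h₀ H :=
      fun p hp => ⟨(hS p hp).1, (hS p hp).2.1, mem_insert_of_mem (hS p hp).2.2⟩
    by_cases hfull : h₀.powersetCard 2 ⊆ S
    · refine ⟨S, φ, hSH, hinj, ?_⟩
      rintro h hh
      rcases mem_insert.1 hh with rfl | hh
      exacts [Or.inr hfull, hcov h hh]
    obtain ⟨p, hp, hpS⟩ := not_subset.1 hfull
    rw [mem_powersetCard] at hp
    have hφ : ∀ q ∈ S, φ q ≠ h₀ := fun q hq he => hh₀ (he ▸ (hS q hq).2.2)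
    have hne : ∀ q ∈ S, q ≠ p := fun q hq he => hpS (he ▸ hq)
    refine ⟨insert p S, update φ p h₀, ?_, ?_, ?_⟩
    · intro q hq
      rcases mem_insert.1 hq with rfl | hq
      · simpa using hp.symm
      · simpa [update_of_ne (hne q hq)] using hSH q hq
    · rw [coe_insert, Set.injOn_insert (by simpa using hpS)]
      refine ⟨hinj.congr fun q hq => (update_of_ne (hne q hq) _ _).symm, ?_⟩
      rintro ⟨q, hq, he⟩
      rw [update_self, update_of_ne (hne q hq)] at he
      exact hφ q hq he
    · intro h hh
      rcases mem_insert.1 hh with rfl | hh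
      · exact Or.inl (mem_image.2 ⟨p, mem_insert_self _ _, update_self _ _ _⟩)
      · rcases hcov h hh with hφh | hS'
        · obtain ⟨q, hq, rfl⟩ := mem_image.1 hφh
          exact Or.inl (mem_image.2 ⟨q, mem_insert_of_mem hq, update_of_ne (hne q hq) _ _⟩)
        · exact Or.inr (hS'.trans (subset_insert _ _))

lemma hasBergeCopy_of_isContained_fromRel {H S : Finset (Finset β)} {φ : Finset β → Finset β}
    (hS : ∀ p ∈ S, p ⊆ φ p ∧ φ p ∈ H) (hinj : Set.InjOn φ S)
    (hG : G ⊑ fromRel fun u v => ({u, v} : Finset β) ∈ S) : HasBergeCopy G H := by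
  obtain ⟨g⟩ := hG
  have hadj : ∀ {a b}, G.Adj a b → ({g a, g b} : Finset β) ∈ S := fun h => by
    obtain ⟨-, h | h⟩ := (fromRel_adj _ _ _).1 (g.toHom.map_adj h)
    exacts [h, pair_comm (g _) (g _) ▸ h]
  have hedge : ∀ x ∈ G.edgeSet, (x.map g).toFinset ∈ S := by
    intro x hx
    induction x with | _ a b => simpa [Sym2.toFinset_mk_eq] using hadj hx
  refine ⟨g, fun x => φ (x.map g).toFinset, g.injective, ?_, fun x hx => (hS _ (hedge x hx)).2,
    fun a b hab => ?_⟩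
  · intro x hx y hy hxy
    have hg : Injective g := g.injective
    refine Sym2.map.injective hg (Sym2.ext fun z => ?_)
    rw [← Sym2.mem_toFinset, ← Sym2.mem_toFinset, hinj (hedge x hx) (hedge y hy) hxy]
  · have hsub := (hS _ (hadj hab)).1
    simp only [Sym2.map_mk, Sym2.toFinset_mk_eq]
    exact ⟨hsub (by simp), hsub (by simp)⟩

lemma card_le_card_edgeFinset_fromRel [Fintype β] {S : Finset (Finset β)}
    (hS : ∀ p ∈ S, p.card = 2) :
    S.card ≤ #(fromRel fun u v => ({u, v} : Finset β) ∈ S).edgeFinset := by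
  refine card_le_card_of_surjOn Sym2.toFinset fun p hp => ?_
  obtain ⟨u, v, huv, rfl⟩ := card_eq_two.1 (hS p hp)
  exact ⟨s(u, v), by simpa [fromRel_adj, huv] using Or.inl hp, Sym2.toFinset_mk_eq⟩

theorem card_covPairs_le_four_mul_extremalNumber [Fintype β] {H : Finset (Finset β)}
    (h3 : ∀ h ∈ H, h.card = 3) (hH : ¬ HasBergeCopy G H) :
    (covPairs H).card ≤ 4 * extremalNumber (Fintype.card β) G := by
  obtain ⟨S, φ, hS, hinj, hcov⟩ := exists_injOn_pair_representatives H
  have hfree : G.Free (fromRel fun u v => ({u, v} : Finset β) ∈ S) := fun hG =>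
    hH (hasBergeCopy_of_isContained_fromRel (fun p hp => (hS p hp).2) hinj hG)
  calc (covPairs H).card ≤ (S ∪ S.biUnion fun p => (φ p).powersetCard 2).card :=
        card_le_card (covPairs_subset_of_representatives hcov)
    _ ≤ S.card + ∑ p ∈ S, ((φ p).powersetCard 2).card :=
        (card_union_le _ _).trans (Nat.add_le_add_left card_biUnion_le _)
    _ = 4 * S.card := by
        rw [sum_congr rfl fun p hp => by rw [card_powersetCard, h3 _ (hS p hp).2.2]]
        simp only [sum_const, smul_eq_mul, Nat.choose]
        ring
    _ ≤ 4 * extremalNumber (Fintype.card β) G := by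
        gcongr
        exact (card_le_card_edgeFinset_fromRel fun p hp => (hS p hp).1).trans
          (card_edgeFinset_le_extremalNumber hfree)

theorem coverTuranNumber_le_four_mul_extremalNumber (n : ℕ) (G : SimpleGraph α) :
    coverTuranNumber {3} n G ≤ 4 * extremalNumber n G :=
  csSup_le' fun _ ⟨_, h3, hH, hm⟩ =>
    hm ▸ by simpa using card_covPairs_le_four_mul_extremalNumber (fun h hh => h3 h hh) hH

end UpperBound

section TwinExpansion

variable {W : Type*} [DecidableEq W]

def twinEdge (u v : W) : Finset (W × Fin 3) := {(u, 0), (u, 1), (v, 2)}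

lemma mem_twinEdge {u v : W} {p : W × Fin 3} :
    p ∈ twinEdge u v ↔ p.1 = if p.2 = 2 then v else u := by
  obtain ⟨a, k⟩ := p
  fin_cases k <;> simp [twinEdge, eq_comm]

lemma card_twinEdge (u v : W) : (twinEdge u v).card = 3 := by
  simp [twinEdge]

lemma eq_two_of_mem_twinEdge {u v : W} {p q r : W × Fin 3} (hp : p ∈ twinEdge u v)
    (hq : q ∈ twinEdge u v) (hr : r ∈ twinEdge u v) (hpq : p ≠ q) (hpr : p ≠ r) (hqr : q ≠ r)
    (hp2 : p.2 ≠ 2) (hq2 : q.2 ≠ 2) : r.2 = 2 := by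
  simp only [twinEdge, mem_insert, mem_singleton] at hp hq hr
  rcases hp with rfl | rfl | rfl <;> rcases hq with rfl | rfl | rfl <;>
    rcases hr with rfl | rfl | rfl <;> simp_all

variable [Fintype W] (F : SimpleGraph W) [DecidableRel F.Adj]

def twinExpansion : Finset (Finset (W × Fin 3)) :=
  univ.image fun d : F.Dart => twinEdge d.fst d.snd

lemma card_of_mem_twinExpansion {h : Finset (W × Fin 3)} (hh : h ∈ twinExpansion F) :
    h.card = 3 := by
  obtain ⟨d, -, rfl⟩ := mem_image.1 hh
  exact card_twinEdge _ _

lemma two_mul_card_edgeFinset_le_card_covPairs_twinExpansion :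
    2 * #F.edgeFinset ≤ (covPairs (twinExpansion F)).card := by
  rw [← dart_card_eq_twice_card_edges, ← card_univ]
  refine card_le_card_of_injOn (fun d => {(d.fst, 0), (d.snd, 2)}) (fun d _ => ?_) ?_
  · refine mem_biUnion.2 ⟨twinEdge d.fst d.snd, mem_image_of_mem _ (mem_univ d), ?_⟩
    simp [twinEdge, mem_powersetCard, insert_subset_iff]
  · intro d _ d' _ hdd'
    simp only at hdd'
    have h0 : (d.fst, (0 : Fin 3)) ∈ ({(d'.fst, 0), (d'.snd, 2)} : Finset (W × Fin 3)) := by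
      simp [← hdd']
    have h2 : (d.snd, (2 : Fin 3)) ∈ ({(d'.fst, 0), (d'.snd, 2)} : Finset (W × Fin 3)) := by
      simp [← hdd']
    simp only [mem_insert, mem_singleton, Prod.ext_iff] at h0 h2
    exact Dart.ext _ _ (Prod.ext (by simpa using h0) (by simpa using h2))

end TwinExpansion

section CompleteBipartite

variable {α γ : Type*}

lemma completeBipartiteGraph_exists_common_adj [Nonempty α] [Nonempty γ] {x y : α ⊕ γ}
    (h : ¬ (completeBipartiteGraph α γ).Adj x y) :
    ∃ z, (completeBipartiteGraph α γ).Adj x z ∧ (completeBipartiteGraph α γ).Adj y z := by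
  rcases x with a | c <;> rcases y with a' | c'
  · exact ⟨.inr (Classical.arbitrary γ), by simp, by simp⟩
  · simp at h
  · simp at h
  · exact ⟨.inl (Classical.arbitrary α), by simp, by simp⟩

lemma completeBipartiteGraph_exists_four_cycle_of_adj [Nontrivial α] [Nontrivial γ]
    {x y : α ⊕ γ} (h : (completeBipartiteGraph α γ).Adj x y) :
    ∃ x' y', x' ≠ x ∧ y' ≠ y ∧ (completeBipartiteGraph α γ).Adj x y' ∧
      (completeBipartiteGraph α γ).Adj x' y ∧ (completeBipartiteGraph α γ).Adj x' y' := by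
  rcases x with a | c <;> rcases y with a' | c'
  · simp at h
  · obtain ⟨a'', ha⟩ := exists_ne a
    obtain ⟨c'', hc⟩ := exists_ne c'
    exact ⟨.inl a'', .inr c'', by simpa, by simpa, by simp, by simp, by simp⟩
  · obtain ⟨c'', hc⟩ := exists_ne c
    obtain ⟨a'', ha⟩ := exists_ne a'
    exact ⟨.inr c'', .inl a'', by simpa, by simpa, by simp, by simp, by simp⟩
  · simp at h

end CompleteBipartite

section TwinExpansionBergeFree

variable {W α γ : Type*} [DecidableEq W]

lemma snd_eq_two_iff_of_adj [Nontrivial α] [Nontrivial γ] {i : α ⊕ γ → W × Fin 3}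
    (hi : Injective i) (hmem : ∀ {x y}, (completeBipartiteGraph α γ).Adj x y →
      ∃ u v, i x ∈ twinEdge u v ∧ i y ∈ twinEdge u v)
    {x y : α ⊕ γ} (hxy : (completeBipartiteGraph α γ).Adj x y) :
    (i x).2 = 2 ↔ (i y).2 ≠ 2 := by
  set K := completeBipartiteGraph α γ
  have not_both_top : ∀ {x y}, K.Adj x y → (i x).2 = 2 → (i y).2 ≠ 2 := fun hxy hx hy => by
    obtain ⟨u, v, hx', hy'⟩ := hmem hxy
    rw [mem_twinEdge, if_pos hx] at hx'
    rw [mem_twinEdge, if_pos hy] at hy'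
    exact hxy.ne (hi (Prod.ext (hx'.trans hy'.symm) (hx.trans hy.symm)))
  have top_of_low_low : ∀ {x y z}, K.Adj x y → K.Adj x z → y ≠ z →
      (i x).2 ≠ 2 → (i y).2 ≠ 2 → (i z).2 = 2 := fun {x y z} hxy hxz hyz hx hy => by
    obtain ⟨u, v, hx', hy'⟩ := hmem hxy
    obtain ⟨u', v', hx'', hz''⟩ := hmem hxz
    have hy'' : i y ∈ twinEdge u' v' := by
      rw [mem_twinEdge, if_neg hx] at hx' hx''
      rw [mem_twinEdge, if_neg hy] at hy' ⊢
      rw [hy', ← hx', hx'']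
    exact eq_two_of_mem_twinEdge hx'' hy'' hz'' (hi.ne hxy.ne) (hi.ne hxz.ne) (hi.ne hyz) hx hy
  refine ⟨not_both_top hxy, fun hy => by_contra fun hx => ?_⟩
  obtain ⟨x', y', hx', hy', hxy', hx'y, hx'y'⟩ :=
    completeBipartiteGraph_exists_four_cycle_of_adj hxy
  exact not_both_top hx'y'
    (top_of_low_low hxy.symm hx'y.symm hx'.symm hy hx)
    (top_of_low_low hxy hxy' hy'.symm hx hy)

theorem not_hasBergeCopy_twinExpansion [Fintype W] {F : SimpleGraph W} [DecidableRel F.Adj]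
    [Nontrivial α] [Nontrivial γ] (hF : (completeBipartiteGraph α γ).Free F) :
    ¬ HasBergeCopy (completeBipartiteGraph α γ) (twinExpansion F) := by
  set K := completeBipartiteGraph α γ
  rintro ⟨i, f, hi, hf, hfH, hif⟩
  have hedge : ∀ {x y}, K.Adj x y → ∃ d : F.Dart, f s(x, y) = twinEdge d.fst d.snd ∧
      i x ∈ twinEdge d.fst d.snd ∧ i y ∈ twinEdge d.fst d.snd := fun {x y} hxy => by
    obtain ⟨d, -, hd⟩ := mem_image.1 (hfH s(x, y) hxy)
    exact ⟨d, hd.symm, hd ▸ hif _ _ hxy⟩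
  have hlayer : ∀ {x y}, K.Adj x y → ((i x).2 = 2 ↔ (i y).2 ≠ 2) :=
    snd_eq_two_iff_of_adj hi fun hxy => by
      obtain ⟨d, -, hd⟩ := hedge hxy
      exact ⟨_, _, hd⟩
  have low_top : ∀ {x y}, K.Adj x y → (i x).2 ≠ 2 → (i y).2 = 2 →
      f s(x, y) = twinEdge (i x).1 (i y).1 ∧ F.Adj (i x).1 (i y).1 := fun hxy hx hy => by
    obtain ⟨d, hd, hx', hy'⟩ := hedge hxy
    rw [mem_twinEdge, if_neg hx] at hx'
    rw [mem_twinEdge, if_pos hy] at hy'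
    exact ⟨hx' ▸ hy' ▸ hd, hx' ▸ hy' ▸ d.adj⟩
  have hom : ∀ {x y}, K.Adj x y → F.Adj (i x).1 (i y).1 := fun {x y} hxy => by
    by_cases hx : (i x).2 = 2
    · exact (low_top hxy.symm ((hlayer hxy).1 hx) hx).2.symm
    · exact (low_top hxy hx (not_not.1 (mt (hlayer hxy).2 hx))).2
  refine hF ⟨⟨⟨fun x => (i x).1, hom⟩, fun x y hxy => by_contra fun hne => ?_⟩⟩
  change (i x).1 = (i y).1 at hxy
  obtain ⟨z, hxz, hyz⟩ := completeBipartiteGraph_exists_common_adj fun h => (hom h).ne hxy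
  by_cases hz : (i z).2 = 2
  · have hx := (hlayer hxz.symm).1 hz
    have hy := (hlayer hyz.symm).1 hz
    have hfxy : f s(x, z) = f s(y, z) := by
      rw [(low_top hxz hx hz).1, (low_top hyz hy hz).1, hxy]
    rcases Sym2.eq_iff.1 (hf hxz hyz hfxy) with ⟨h, -⟩ | ⟨h, h'⟩
    exacts [hne h, hne (h.trans h')]
  · have hx := not_not.1 (mt (hlayer hxz.symm).2 hz)
    have hy := not_not.1 (mt (hlayer hyz.symm).2 hz)
    exact hne (hi (Prod.ext hxy (hx.trans hy.symm)))

end TwinExpansionBergeFree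

theorem two_mul_extremalNumber_le_coverTuranNumber {α γ : Type*} [Nontrivial α] [Nontrivial γ]
    {m n : ℕ} (hmn : 3 * m ≤ n) :
    2 * extremalNumber m (completeBipartiteGraph α γ) ≤
      coverTuranNumber {3} n (completeBipartiteGraph α γ) := by
  classical
  set K := completeBipartiteGraph α γ
  have hK : ∀ x, ∃ y, K.Adj x y := fun x =>
    (completeBipartiteGraph_exists_common_adj (K.irrefl (v := x))).imp fun _ h => h.1
  obtain ⟨F, _, hF⟩ := exists_isExtremal_free (V := Fin m)
    (ne_bot_iff_exists_adj.2 ⟨_, hK (.inl (Classical.arbitrary α))⟩)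
  let E : Fin m × Fin 3 ↪ Fin n :=
    finProdFinEquiv.toEmbedding.trans (Fin.castLEEmb (by rw [mul_comm]; exact hmn))
  have h3 : ∀ h ∈ (twinExpansion F).image (map E), h.card ∈ ({3} : Set ℕ) := by
    intro h hh
    obtain ⟨h', hh', rfl⟩ := mem_image.1 hh
    rw [card_map, card_of_mem_twinExpansion F hh']
    rfl
  calc 2 * extremalNumber m K = 2 * #F.edgeFinset := by
        rw [card_edgeFinset_of_isExtremal_free hF, Fintype.card_fin]
    _ ≤ (covPairs (twinExpansion F)).card :=
        two_mul_card_edgeFinset_le_card_covPairs_twinExpansion F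
    _ = (covPairs ((twinExpansion F).image (map E))).card := by
        rw [covPairs_image_map, card_map]
    _ ≤ coverTuranNumber {3} n K := le_coverTuranNumber h3 fun hB =>
        not_hasBergeCopy_twinExpansion hF.prop (hB.of_image_map hK E)

lemma extremalNumber_le_mul_extremalNumber_div_three {W : Type*} (H : SimpleGraph W) {n : ℕ}
    (hn : 6 ≤ n) : extremalNumber n H ≤ 28 * extremalNumber (n / 3) H := by
  set m := n / 3
  have hm : 2 ≤ m := by omega
  have hanti := antitoneOn_extremalNumber_div_choose_two H hm (hm.trans (Nat.div_le_self n 3))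
    (Nat.div_le_self n 3)
  have hCm : (0 : ℝ) < m.choose 2 := by exact_mod_cast Nat.choose_pos hm
  have hCn : (0 : ℝ) < n.choose 2 := by exact_mod_cast Nat.choose_pos (by omega)
  have hchoose : (n.choose 2 : ℝ) ≤ 28 * m.choose 2 := by
    have hn' : (n : ℝ) ≤ 3 * m + 2 := by exact_mod_cast (by omega : n ≤ 3 * m + 2)
    have hm' : (2 : ℝ) ≤ m := by exact_mod_cast hm
    rw [Nat.cast_choose_two, Nat.cast_choose_two]
    nlinarith
  simp only at hanti
  rw [div_le_div_iff₀ hCn hCm] at hanti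
  have key : (extremalNumber n H : ℝ) * m.choose 2 ≤ 28 * extremalNumber m H * m.choose 2 :=
    calc _ ≤ (extremalNumber m H : ℝ) * n.choose 2 := hanti
      _ ≤ extremalNumber m H * (28 * m.choose 2) := by gcongr
      _ = _ := by ring
  exact_mod_cast le_of_mul_le_mul_right key hCm

theorem stmt10 (s t : ℕ) (hs : 2 ≤ s) (hst : s ≤ t) :
    ∃ c₁ c₂ : ℝ, 0 < c₁ ∧ 0 < c₂ ∧ ∃ n₀ : ℕ, ∀ n ≥ n₀,
      c₁ * (turanNumber n (completeBipartiteGraph (Fin s) (Fin t)) : ℝ) ≤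
          (coverTuranNumber {3} n (completeBipartiteGraph (Fin s) (Fin t)) : ℝ) ∧
      (coverTuranNumber {3} n (completeBipartiteGraph (Fin s) (Fin t)) : ℝ) ≤
          c₂ * (turanNumber n (completeBipartiteGraph (Fin s) (Fin t)) : ℝ) := by
  have : Nontrivial (Fin s) := Fin.nontrivial_iff_two_le.2 hs
  have : Nontrivial (Fin t) := Fin.nontrivial_iff_two_le.2 (hs.trans hst)
  refine ⟨1 / 14, 4, by norm_num, by norm_num, 6, fun n hn => ?_⟩
  have hlow := Nat.cast_le (α := ℝ) |>.2 <|
    two_mul_extremalNumber_le_coverTuranNumber (α := Fin s) (γ := Fin t) (Nat.mul_div_le n 3)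
  have hmono := Nat.cast_le (α := ℝ) |>.2 <|
    extremalNumber_le_mul_extremalNumber_div_three (completeBipartiteGraph (Fin s) (Fin t)) hn
  have hup := Nat.cast_le (α := ℝ) |>.2 <|
    coverTuranNumber_le_four_mul_extremalNumber n (completeBipartiteGraph (Fin s) (Fin t))
  push_cast at hlow hmono hup
  rw [turanNumber_eq_extremalNumber]
  constructor <;> linarith
end

section
/- Fix a positive integer s. Let (X,Y) be an ε-regular pair of disjoint vertex sets in a graph G with edge density d, and suppose ε ≤ 1/(4s), (d−ε)^s ≥ 4ε, and |X|, |Y| ≥ 4s/(d−ε)^s. Then there exist disjoint subsets A, C ⊆ X and disjoint subsets B, D ⊆ Y such that |A| = |B| = s, |C| ≥ ε|X|, |D| ≥ ε|Y|, and in G every vertex of A is adjacent to every vertex of D, every vertex of B is adjacent to every vertex of C, and every vertex of A is adjacent to every vertex of B. -/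
open Finset

/-- The pair `(X, Y)` is `ε`-regular in `G`: for all `X' ⊆ X` and `Y' ⊆ Y` with
`|X'| ≥ ε|X|` and `|Y'| ≥ ε|Y|`, the edge densities satisfy
`|d(X', Y') − d(X, Y)| ≤ ε`. -/
def IsRegularPair {α : Type*} [Fintype α] [DecidableEq α] (G : SimpleGraph α)
    [DecidableRel G.Adj] (ε : ℝ) (X Y : Finset α) : Prop :=
  ∀ X' ⊆ X, ∀ Y' ⊆ Y, ε * (X.card : ℝ) ≤ (X'.card : ℝ) →
    ε * (Y.card : ℝ) ≤ (Y'.card : ℝ) →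
    |(G.edgeDensity X' Y' : ℝ) - (G.edgeDensity X Y : ℝ)| ≤ ε

lemma card_interedges_sum' {α β : Type*} (r : α → β → Prop) [∀ a, DecidablePred (r a)]
    [DecidableEq α] [DecidableEq β] (s : Finset α) (t : Finset β) :
    (Rel.interedges r s t).card = ∑ x ∈ s, (t.filter (r x)).card := by
  rw [Rel.interedges_eq_biUnion, Finset.card_biUnion]
  · simp
  · intro x hx y hy hxy
    simp only [Finset.disjoint_left, Finset.mem_map, Function.Embedding.coeFn_mk]
    rintro ⟨a, b⟩ ⟨u, hu, h⟩ ⟨v, hv, h2⟩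
    cases h; cases h2; exact hxy rfl

lemma regpair_symm {α : Type*} [Fintype α] [DecidableEq α] (G : SimpleGraph α)
    [DecidableRel G.Adj] {ε : ℝ} {X Y : Finset α} (h : IsRegularPair G ε X Y) :
    IsRegularPair G ε Y X := by
  intro Y' hY' X' hX' h1 h2
  rw [SimpleGraph.edgeDensity_comm G Y' X', SimpleGraph.edgeDensity_comm G Y X]
  exact h X' hX' Y' hY' h2 h1

/-- The greedy embedding step. -/
lemma greedy {α : Type*} [Fintype α] [DecidableEq α] (G : SimpleGraph α)
    [DecidableRel G.Adj] (ε d : ℝ) (X Y : Finset α) (hreg : IsRegularPair G ε X Y)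
    (hd : d = (G.edgeDensity X Y : ℝ)) (hε : 0 < ε) (hδ : 0 < d - ε) (hδ1 : d - ε ≤ 1)
    (hX0 : (0:ℝ) < X.card) (hY0 : (0:ℝ) < Y.card)
    (S : Finset α) (hSX : S ⊆ X) (T0 : Finset α) (hT0 : T0 ⊆ Y) :
    ∀ i : ℕ, ((i:ℝ) + ε * X.card ≤ S.card) →
      (ε * (Y.card:ℝ) ≤ (d - ε)^i * T0.card) →
      ∃ A T : Finset α, A ⊆ S ∧ T ⊆ T0 ∧ A.card = i ∧
        (d - ε)^i * (T0.card:ℝ) ≤ T.card ∧ ∀ a ∈ A, ∀ y ∈ T, G.Adj a y := by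
  intro i
  induction i with
  | zero =>
    intro _ _
    exact ⟨∅, T0, empty_subset _, subset_rfl, card_empty, by simp, by simp⟩
  | succ i ih =>
    intro hS hεδ
    have hT0c : (0:ℝ) ≤ (T0.card : ℝ) := Nat.cast_nonneg _
    have hpow : (d - ε)^(i+1) ≤ (d - ε)^i := pow_le_pow_of_le_one hδ.le hδ1 (by omega)
    have hεδi : ε * (Y.card:ℝ) ≤ (d - ε)^i * T0.card :=
      hεδ.trans (mul_le_mul_of_nonneg_right hpow hT0c)
    obtain ⟨A, T, hAS, hTT0, hAcard, hTcard, hadj⟩ := ih (by push_cast at hS ⊢; linarith) hεδi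
    have hTY : T ⊆ Y := hTT0.trans hT0
    have hεT : ε * (Y.card:ℝ) ≤ T.card := hεδi.trans hTcard
    have hTne : T.Nonempty := by
      rw [← Finset.card_pos, ← Nat.cast_pos (α := ℝ)]
      nlinarith
    set bad := X.filter (fun x => ((T.filter (G.Adj x)).card : ℝ) < (d - ε) * T.card) with hbad
    have hbadlt : (bad.card:ℝ) < ε * X.card := by
      by_contra hcon
      push_neg at hcon
      have hbadne : bad.Nonempty := by
        rw [← Finset.card_pos, ← Nat.cast_pos (α := ℝ)]
        nlinarith
      have hregbad := hreg bad (filter_subset _ _) T hTY hcon hεT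
      rw [← hd] at hregbad
      have hsum : ((G.interedges bad T).card : ℝ) < (bad.card : ℝ) * ((d - ε) * T.card) := by
        have : (G.interedges bad T).card = ∑ x ∈ bad, (T.filter (G.Adj x)).card :=
          card_interedges_sum' G.Adj bad T
        rw [this]
        push_cast
        calc ∑ x ∈ bad, ((T.filter (G.Adj x)).card : ℝ)
            < ∑ _x ∈ bad, (d - ε) * (T.card : ℝ) := by
              apply Finset.sum_lt_sum_of_nonempty hbadne
              intro x hx
              exact (Finset.mem_filter.1 hx).2
          _ = (bad.card : ℝ) * ((d - ε) * T.card) := by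
              rw [Finset.sum_const, nsmul_eq_mul]
      have hdens : (G.edgeDensity bad T : ℝ) < d - ε := by
        have heq : (G.edgeDensity bad T : ℝ) =
            ((G.interedges bad T).card : ℝ) / ((bad.card : ℝ) * T.card) := by
          rw [SimpleGraph.edgeDensity, Rel.edgeDensity]
          push_cast
          rfl
        rw [heq, div_lt_iff₀ (by positivity)]
        have hb0 : (0:ℝ) < bad.card := by
          exact_mod_cast Finset.card_pos.2 hbadne
        nlinarith
      rw [abs_le] at hregbad
      linarith [hregbad.1]
    have havail : (S \ (bad ∪ A)).Nonempty := by
      rw [← Finset.card_pos, ← Nat.cast_pos (α := ℝ)]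
      have h1 : S.card ≤ (S \ (bad ∪ A)).card + (bad ∪ A).card :=
        Finset.card_le_card_sdiff_add_card
      have h2 : (bad ∪ A).card ≤ bad.card + A.card := Finset.card_union_le _ _
      have h3 : (S.card : ℝ) ≤ ((S \ (bad ∪ A)).card : ℝ) + bad.card + A.card := by
        have h4 := h1.trans (Nat.add_le_add_left h2 _)
        have h5 : (S.card:ℝ) ≤ ((S \ (bad ∪ A)).card : ℝ) + ((bad.card + A.card : ℕ) : ℝ) := by
          exact_mod_cast h4
        push_cast at h5
        linarith
      rw [hAcard] at h3
      push_cast at hS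
      linarith
    obtain ⟨a, ha⟩ := havail
    rw [Finset.mem_sdiff, Finset.mem_union, not_or] at ha
    obtain ⟨haS, hanbad, hanA⟩ := ha
    have haX : a ∈ X := hSX haS
    have hdeg : (d - ε) * (T.card:ℝ) ≤ (T.filter (G.Adj a)).card := by
      by_contra hcon
      push_neg at hcon
      exact hanbad (Finset.mem_filter.2 ⟨haX, hcon⟩)
    refine ⟨insert a A, T.filter (G.Adj a), Finset.insert_subset haS hAS,
      (Finset.filter_subset _ _).trans hTT0, by rw [Finset.card_insert_of_notMem hanA, hAcard],
      ?_, ?_⟩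
    · calc (d - ε)^(i+1) * (T0.card:ℝ) = (d - ε) * ((d - ε)^i * T0.card) := by ring
        _ ≤ (d - ε) * T.card := mul_le_mul_of_nonneg_left hTcard hδ.le
        _ ≤ _ := hdeg
    · intro a' ha' y hy
      rcases Finset.mem_insert.1 ha' with rfl | ha'
      · exact (Finset.mem_filter.1 hy).2
      · exact hadj a' ha' y (Finset.filter_subset _ _ hy)

theorem stmt12 {α : Type*} [Fintype α] [DecidableEq α] (G : SimpleGraph α)
    [DecidableRel G.Adj] (s : ℕ) (hs : 0 < s) (ε d : ℝ) (hε : 0 < ε)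
    (X Y : Finset α) (hXY : Disjoint X Y) (hreg : IsRegularPair G ε X Y)
    (hd : d = (G.edgeDensity X Y : ℝ))
    (hε4s : ε ≤ 1 / (4 * (s : ℝ))) (hds : 4 * ε ≤ (d - ε) ^ s)
    (hX : 4 * (s : ℝ) / (d - ε) ^ s ≤ (X.card : ℝ))
    (hY : 4 * (s : ℝ) / (d - ε) ^ s ≤ (Y.card : ℝ)) :
    ∃ A C B D : Finset α,
      A ⊆ X ∧ C ⊆ X ∧ B ⊆ Y ∧ D ⊆ Y ∧ Disjoint A C ∧ Disjoint B D ∧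
      A.card = s ∧ B.card = s ∧
      ε * (X.card : ℝ) ≤ (C.card : ℝ) ∧ ε * (Y.card : ℝ) ≤ (D.card : ℝ) ∧
      (∀ a ∈ A, ∀ y ∈ D, G.Adj a y) ∧
      (∀ b ∈ B, ∀ x ∈ C, G.Adj b x) ∧
      (∀ a ∈ A, ∀ b ∈ B, G.Adj a b) := by
  have hs1 : (1:ℝ) ≤ s := by exact_mod_cast hs
  have hε14 : ε ≤ 1/4 := by
    have h4s : (4:ℝ) ≤ 4 * s := by linarith
    calc ε ≤ 1 / (4 * s) := hε4s
      _ ≤ 1/4 := by apply one_div_le_one_div_of_le <;> linarith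
  have hd0 : (0:ℝ) ≤ d := hd ▸ (by exact_mod_cast G.edgeDensity_nonneg X Y)
  have hd1 : d ≤ 1 := hd ▸ (by exact_mod_cast G.edgeDensity_le_one X Y)
  have hδ : 0 < d - ε := by
    by_contra hcon
    push_neg at hcon
    have h1 : (d - ε)^s ≤ |d - ε|^s := by
      calc (d - ε)^s ≤ |(d - ε)^s| := le_abs_self _
        _ = |d - ε|^s := by rw [abs_pow]
    have h2 : |d - ε| ≤ ε := by rw [abs_le]; constructor <;> linarith
    have h3 : |d - ε|^s ≤ ε^s := pow_le_pow_left₀ (abs_nonneg _) h2 s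
    have h4 : ε^s ≤ ε := pow_le_of_le_one hε.le (by linarith) hs.ne'
    linarith
  have hδ1 : d - ε ≤ 1 := by linarith
  have hδs0 : 0 < (d - ε)^s := pow_pos hδ s
  have hδs1 : (d - ε)^s ≤ 1 := pow_le_one₀ hδ.le hδ1
  have hXc0 : (0:ℝ) ≤ X.card := Nat.cast_nonneg _
  have hYc0 : (0:ℝ) ≤ Y.card := Nat.cast_nonneg _
  have hXs4 : 4 * (s:ℝ) ≤ (d - ε)^s * X.card := by
    rw [div_le_iff₀ hδs0] at hX; linarith
  have hYs4 : 4 * (s:ℝ) ≤ (d - ε)^s * Y.card := by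
    rw [div_le_iff₀ hδs0] at hY; linarith
  have hXle : (d - ε)^s * X.card ≤ X.card := by
    have := mul_le_mul_of_nonneg_right hδs1 hXc0
    linarith
  have hYle : (d - ε)^s * Y.card ≤ Y.card := by
    have := mul_le_mul_of_nonneg_right hδs1 hYc0
    linarith
  have hXs : 4 * (s:ℝ) ≤ X.card := hXs4.trans hXle
  have hYs : 4 * (s:ℝ) ≤ Y.card := hYs4.trans hYle
  have hX0 : (0:ℝ) < X.card := by linarith
  have hY0 : (0:ℝ) < Y.card := by linarith
  have hεδs : ε ≤ (d - ε)^s := by linarith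
  have hεX4 : ε * (X.card:ℝ) ≤ (1/4) * X.card := mul_le_mul_of_nonneg_right hε14 hXc0
  have hεY4 : ε * (Y.card:ℝ) ≤ (1/4) * Y.card := mul_le_mul_of_nonneg_right hε14 hYc0
  have h4eX : 4 * (ε * (X.card:ℝ)) ≤ (d - ε)^s * X.card := by
    calc 4 * (ε * (X.card:ℝ)) = (4 * ε) * X.card := by ring
      _ ≤ (d - ε)^s * X.card := mul_le_mul_of_nonneg_right hds hXc0
  have h4eY : 4 * (ε * (Y.card:ℝ)) ≤ (d - ε)^s * Y.card := by
    calc 4 * (ε * (Y.card:ℝ)) = (4 * ε) * Y.card := by ring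
      _ ≤ (d - ε)^s * Y.card := mul_le_mul_of_nonneg_right hds hYc0
  have hεXnn : (0:ℝ) ≤ ε * X.card := mul_nonneg hε.le hXc0
  have hεYnn : (0:ℝ) ≤ ε * Y.card := mul_nonneg hε.le hYc0
  -- Stage 1: build A and T1
  obtain ⟨A, T1, hAX, hT1Y, hAcard, hT1card, hadj1⟩ :=
    greedy G ε d X Y hreg hd hε hδ hδ1 hX0 hY0 X subset_rfl Y subset_rfl s
      (by linarith)
      (mul_le_mul_of_nonneg_right hεδs hYc0)
  -- Stage 2: build B and C
  have hd' : d = (G.edgeDensity Y X : ℝ) := by rw [hd, SimpleGraph.edgeDensity_comm]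
  have hsX : s ≤ X.card := by
    have : (s:ℝ) ≤ X.card := by linarith
    exact_mod_cast this
  have hXAcard : ((X \ A).card : ℝ) = (X.card : ℝ) - s := by
    rw [Finset.card_sdiff_of_subset hAX, hAcard, Nat.cast_sub hsX]
  have hεδ2 : ε * (X.card:ℝ) ≤ (d - ε)^s * ((X \ A).card : ℝ) := by
    rw [hXAcard]
    have h34 : (3/4) * (X.card:ℝ) ≤ (X.card:ℝ) - s := by linarith
    have hkey : (4 * ε) * ((3/4) * (X.card:ℝ)) ≤ (d - ε)^s * ((X.card:ℝ) - s) :=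
      mul_le_mul (by linarith) h34 (by linarith) hδs0.le
    calc ε * (X.card:ℝ) ≤ 3 * (ε * X.card) := by linarith
      _ = (4 * ε) * ((3/4) * (X.card:ℝ)) := by ring
      _ ≤ _ := hkey
  have hsT1 : (s:ℝ) + ε * (Y.card:ℝ) ≤ T1.card := by linarith
  obtain ⟨B, C, hBT1, hCXA, hBcard, hCcard, hadj2⟩ :=
    greedy G ε d Y X (regpair_symm G hreg) hd' hε hδ hδ1 hY0 hX0 T1 hT1Y (X \ A)
      Finset.sdiff_subset s hsT1 hεδ2
  have hCX : C ⊆ X := hCXA.trans Finset.sdiff_subset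
  have hsT1' : s ≤ T1.card := by
    have : (s:ℝ) ≤ T1.card := by linarith
    exact_mod_cast this
  refine ⟨A, C, B, T1 \ B, hAX, hCX, hBT1.trans hT1Y, (Finset.sdiff_subset).trans hT1Y,
    ?_, Finset.sdiff_disjoint.symm, hAcard, hBcard, hεδ2.trans hCcard, ?_, ?_, ?_, ?_⟩
  · rw [Finset.disjoint_left]
    intro a haA haC
    exact (Finset.mem_sdiff.1 (hCXA haC)).2 haA
  · have hDcard : ((T1 \ B).card : ℝ) = (T1.card : ℝ) - s := by
      rw [Finset.card_sdiff_of_subset hBT1, hBcard, Nat.cast_sub hsT1']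
    rw [hDcard]
    linarith
  · intro a ha y hy
    exact hadj1 a ha y (Finset.mem_sdiff.1 hy).1
  · intro b hb x hx
    exact hadj2 b hb x hx
  · intro a ha b hb
    exact hadj1 a ha b (hBT1 hb)
end

section
/- Let m be a positive integer and let H₁ be the 3-uniform hypergraph on the vertex set A ∪ B, where A = {a₁, …, a₂ₘ} and B = {b₁, …, b₂ₘ} are disjoint, whose hyperedges are exactly the sets {aᵢ, b_{2j−1}, b_{2j}} for 1 ≤ i ≤ 2m and 1 ≤ j ≤ m. Then H₁ contains no Berge triangle, i.e., no Berge copy of C₃. -/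
/-- The 3-uniform hypergraph `H₁` on `A ∪ B` with `A = {a₁, …, a_{2m}}` (the left
summand) and `B = {b₁, …, b_{2m}}` (the right summand), whose hyperedges are exactly
the sets `{aᵢ, b_{2j−1}, b_{2j}}`. -/
def H1 (m : ℕ) : Finset (Finset (Fin (2 * m) ⊕ Fin (2 * m))) :=
  (Finset.univ : Finset (Fin (2 * m) × Fin m)).image fun p =>
    {Sum.inl p.1,
      Sum.inr ⟨2 * (p.2 : ℕ), by have := p.2.isLt; omega⟩,
      Sum.inr ⟨2 * (p.2 : ℕ) + 1, by have := p.2.isLt; omega⟩}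

/-- Numeric code of a vertex of `H1 m`. -/
def code (m : ℕ) : (Fin (2 * m) ⊕ Fin (2 * m)) → ℕ :=
  Sum.elim (fun a => (a : ℕ)) (fun b => 2 * m + (b : ℕ))

lemma code_inj (m : ℕ) : Function.Injective (code m) := by
  rintro (a | a) (b | b) h <;>
    simp only [code, Sum.elim_inl, Sum.elim_inr] at h
  · exact congrArg Sum.inl (Fin.ext h)
  · exact absurd h (by have := a.isLt; omega)
  · exact absurd h (by have := b.isLt; omega)
  · exact congrArg Sum.inr (Fin.ext (by omega))

/-- Two distinct members of a hyperedge cannot both be `A`-vertices. -/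
lemma two_aux (M a j x y : ℕ) (ha : a < M)
    (hx : x = a ∨ x = M + 2 * j ∨ x = M + (2 * j + 1))
    (hy : y = a ∨ y = M + 2 * j ∨ y = M + (2 * j + 1)) (hxy : x ≠ y) :
    M ≤ x ∨ M ≤ y := by omega

lemma blk_aux (M a j x : ℕ) (ha : a < M) (hMx : M ≤ x)
    (hx : x = a ∨ x = M + 2 * j ∨ x = M + (2 * j + 1)) :
    x = M + 2 * j ∨ x = M + (2 * j + 1) := by omega

lemma blockeq_aux (M j j' x : ℕ) (h : x = M + 2 * j ∨ x = M + (2 * j + 1))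
    (h' : x = M + 2 * j' ∨ x = M + (2 * j' + 1)) : j = j' := by omega

lemma small_aux (M a j x : ℕ) (hx : x = a ∨ x = M + 2 * j ∨ x = M + (2 * j + 1))
    (hxM : x < M) : x = a := by omega

lemma main_arith (M a01 j01 a12 j12 a02 j02 x0 x1 x2 : ℕ)
    (ha01 : a01 < M) (ha12 : a12 < M) (ha02 : a02 < M)
    (h0a : x0 = a01 ∨ x0 = M + 2 * j01 ∨ x0 = M + (2 * j01 + 1))
    (h1a : x1 = a01 ∨ x1 = M + 2 * j01 ∨ x1 = M + (2 * j01 + 1))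
    (h1b : x1 = a12 ∨ x1 = M + 2 * j12 ∨ x1 = M + (2 * j12 + 1))
    (h2b : x2 = a12 ∨ x2 = M + 2 * j12 ∨ x2 = M + (2 * j12 + 1))
    (h0c : x0 = a02 ∨ x0 = M + 2 * j02 ∨ x0 = M + (2 * j02 + 1))
    (h2c : x2 = a02 ∨ x2 = M + 2 * j02 ∨ x2 = M + (2 * j02 + 1))
    (ne01 : x0 ≠ x1) (ne12 : x1 ≠ x2) (ne02 : x0 ≠ x2)
    (k1 : a01 ≠ a12 ∨ j01 ≠ j12)
    (k2 : a01 ≠ a02 ∨ j01 ≠ j02)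
    (k3 : a12 ≠ a02 ∨ j12 ≠ j02) : False := by
  have t01 := two_aux M a01 j01 x0 x1 ha01 h0a h1a ne01
  have t12 := two_aux M a12 j12 x1 x2 ha12 h1b h2b ne12
  have t02 := two_aux M a02 j02 x0 x2 ha02 h0c h2c ne02
  by_cases hx0 : M ≤ x0
  · by_cases hx1 : M ≤ x1
    · by_cases hx2 : M ≤ x2
      · -- all three vertices are B-vertices
        have b0a := blk_aux M a01 j01 x0 ha01 hx0 h0a
        have b1a := blk_aux M a01 j01 x1 ha01 hx1 h1a
        have b1b := blk_aux M a12 j12 x1 ha12 hx1 h1b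
        have b2b := blk_aux M a12 j12 x2 ha12 hx2 h2b
        have b0c := blk_aux M a02 j02 x0 ha02 hx0 h0c
        have e1 : j01 = j02 := blockeq_aux M _ _ _ b0a b0c
        have e2 : j01 = j12 := blockeq_aux M _ _ _ b1a b1b
        clear h0a h1a h1b h2b h0c h2c t01 t12 t02 k1 k2 k3
        omega
      · -- x2 is the unique A-vertex
        have hx2' : x2 < M := by omega
        have e2b : x2 = a12 := small_aux M a12 j12 x2 h2b hx2'
        have e2c : x2 = a02 := small_aux M a02 j02 x2 h2c hx2'
        have b0a := blk_aux M a01 j01 x0 ha01 hx0 h0a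
        have b1a := blk_aux M a01 j01 x1 ha01 hx1 h1a
        have b1b := blk_aux M a12 j12 x1 ha12 hx1 h1b
        have b0c := blk_aux M a02 j02 x0 ha02 hx0 h0c
        have e1 : j01 = j02 := blockeq_aux M _ _ _ b0a b0c
        have e2 : j01 = j12 := blockeq_aux M _ _ _ b1a b1b
        clear h0a h1a h1b h2b h0c h2c t01 t12 t02 k1 k2
        omega
    · -- x1 is the unique A-vertex
      have hx1' : x1 < M := by omega
      have hx2 : M ≤ x2 := by
        rcases t12 with h | h
        · omega
        · exact h
      have e1a : x1 = a01 := small_aux M a01 j01 x1 h1a hx1'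
      have e1b : x1 = a12 := small_aux M a12 j12 x1 h1b hx1'
      have b0a := blk_aux M a01 j01 x0 ha01 hx0 h0a
      have b0c := blk_aux M a02 j02 x0 ha02 hx0 h0c
      have b2b := blk_aux M a12 j12 x2 ha12 hx2 h2b
      have b2c := blk_aux M a02 j02 x2 ha02 hx2 h2c
      have e1 : j01 = j02 := blockeq_aux M _ _ _ b0a b0c
      have e2 : j12 = j02 := blockeq_aux M _ _ _ b2b b2c
      clear h0a h1a h1b h2b h0c h2c t01 t12 t02 k2 k3
      omega
  · -- x0 is the unique A-vertex
    have hx0' : x0 < M := by omega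
    have hx1 : M ≤ x1 := by
      rcases t01 with h | h
      · omega
      · exact h
    have hx2 : M ≤ x2 := by
      rcases t02 with h | h
      · omega
      · exact h
    have e0a : x0 = a01 := small_aux M a01 j01 x0 h0a hx0'
    have e0c : x0 = a02 := small_aux M a02 j02 x0 h0c hx0'
    have b1a := blk_aux M a01 j01 x1 ha01 hx1 h1a
    have b1b := blk_aux M a12 j12 x1 ha12 hx1 h1b
    have b2b := blk_aux M a12 j12 x2 ha12 hx2 h2b
    have b2c := blk_aux M a02 j02 x2 ha02 hx2 h2c
    have e1 : j01 = j12 := blockeq_aux M _ _ _ b1a b1b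
    have e2 : j12 = j02 := blockeq_aux M _ _ _ b2b b2c
    clear h0a h1a h1b h2b h0c h2c t01 t12 t02 k1 k3
    omega

theorem stmt13 (m : ℕ) (hm : 0 < m) :
    ¬ HasBergeCopy (⊤ : SimpleGraph (Fin 3)) (H1 m) := by
  rintro ⟨i, f, hi, hfinj, hfH, hadj⟩
  have adj01 : (⊤ : SimpleGraph (Fin 3)).Adj 0 1 := by simp
  have adj12 : (⊤ : SimpleGraph (Fin 3)).Adj 1 2 := by simp
  have adj02 : (⊤ : SimpleGraph (Fin 3)).Adj 0 2 := by simp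
  have he01 : s((0 : Fin 3), (1 : Fin 3)) ∈ (⊤ : SimpleGraph (Fin 3)).edgeSet :=
    (SimpleGraph.mem_edgeSet _).2 adj01
  have he12 : s((1 : Fin 3), (2 : Fin 3)) ∈ (⊤ : SimpleGraph (Fin 3)).edgeSet :=
    (SimpleGraph.mem_edgeSet _).2 adj12
  have he02 : s((0 : Fin 3), (2 : Fin 3)) ∈ (⊤ : SimpleGraph (Fin 3)).edgeSet :=
    (SimpleGraph.mem_edgeSet _).2 adj02
  obtain ⟨p01, -, hp01⟩ := Finset.mem_image.1 (hfH _ he01)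
  obtain ⟨p12, -, hp12⟩ := Finset.mem_image.1 (hfH _ he12)
  obtain ⟨p02, -, hp02⟩ := Finset.mem_image.1 (hfH _ he02)
  -- membership facts
  have hv0_01 := (hadj 0 1 adj01).1
  have hv1_01 := (hadj 0 1 adj01).2
  have hv1_12 := (hadj 1 2 adj12).1
  have hv2_12 := (hadj 1 2 adj12).2
  have hv0_02 := (hadj 0 2 adj02).1
  have hv2_02 := (hadj 0 2 adj02).2
  rw [← hp01] at hv0_01 hv1_01
  rw [← hp12] at hv1_12 hv2_12
  rw [← hp02] at hv0_02 hv2_02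
  simp only [Finset.mem_insert, Finset.mem_singleton] at hv0_01 hv1_01 hv1_12 hv2_12 hv0_02 hv2_02
  -- numeric membership facts
  have c0_01 : code m (i 0) = (p01.1 : ℕ) ∨ code m (i 0) = 2 * m + 2 * (p01.2 : ℕ) ∨
      code m (i 0) = 2 * m + (2 * (p01.2 : ℕ) + 1) := by
    rcases hv0_01 with h | h | h <;> rw [h] <;> simp [code]
  have c1_01 : code m (i 1) = (p01.1 : ℕ) ∨ code m (i 1) = 2 * m + 2 * (p01.2 : ℕ) ∨
      code m (i 1) = 2 * m + (2 * (p01.2 : ℕ) + 1) := by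
    rcases hv1_01 with h | h | h <;> rw [h] <;> simp [code]
  have c1_12 : code m (i 1) = (p12.1 : ℕ) ∨ code m (i 1) = 2 * m + 2 * (p12.2 : ℕ) ∨
      code m (i 1) = 2 * m + (2 * (p12.2 : ℕ) + 1) := by
    rcases hv1_12 with h | h | h <;> rw [h] <;> simp [code]
  have c2_12 : code m (i 2) = (p12.1 : ℕ) ∨ code m (i 2) = 2 * m + 2 * (p12.2 : ℕ) ∨
      code m (i 2) = 2 * m + (2 * (p12.2 : ℕ) + 1) := by
    rcases hv2_12 with h | h | h <;> rw [h] <;> simp [code]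
  have c0_02 : code m (i 0) = (p02.1 : ℕ) ∨ code m (i 0) = 2 * m + 2 * (p02.2 : ℕ) ∨
      code m (i 0) = 2 * m + (2 * (p02.2 : ℕ) + 1) := by
    rcases hv0_02 with h | h | h <;> rw [h] <;> simp [code]
  have c2_02 : code m (i 2) = (p02.1 : ℕ) ∨ code m (i 2) = 2 * m + 2 * (p02.2 : ℕ) ∨
      code m (i 2) = 2 * m + (2 * (p02.2 : ℕ) + 1) := by
    rcases hv2_02 with h | h | h <;> rw [h] <;> simp [code]
  -- injectivity of i in numeric form
  have ne01 : code m (i 0) ≠ code m (i 1) := fun h => by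
    have := hi (code_inj m h); exact absurd this (by decide)
  have ne12 : code m (i 1) ≠ code m (i 2) := fun h => by
    have := hi (code_inj m h); exact absurd this (by decide)
  have ne02 : code m (i 0) ≠ code m (i 2) := fun h => by
    have := hi (code_inj m h); exact absurd this (by decide)
  -- injectivity of f : the hyperedge parameters are pairwise distinct
  have key0112 : (p01.1 : ℕ) ≠ (p12.1 : ℕ) ∨ (p01.2 : ℕ) ≠ (p12.2 : ℕ) := by
    by_contra h
    push_neg at h
    have hp : p01 = p12 := Prod.ext (Fin.ext h.1) (Fin.ext h.2)
    have : f s((0 : Fin 3), (1 : Fin 3)) = f s((1 : Fin 3), (2 : Fin 3)) := by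
      rw [← hp01, ← hp12, hp]
    exact absurd (hfinj he01 he12 this) (by decide)
  have key0102 : (p01.1 : ℕ) ≠ (p02.1 : ℕ) ∨ (p01.2 : ℕ) ≠ (p02.2 : ℕ) := by
    by_contra h
    push_neg at h
    have hp : p01 = p02 := Prod.ext (Fin.ext h.1) (Fin.ext h.2)
    have : f s((0 : Fin 3), (1 : Fin 3)) = f s((0 : Fin 3), (2 : Fin 3)) := by
      rw [← hp01, ← hp02, hp]
    exact absurd (hfinj he01 he02 this) (by decide)
  have key1202 : (p12.1 : ℕ) ≠ (p02.1 : ℕ) ∨ (p12.2 : ℕ) ≠ (p02.2 : ℕ) := by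
    by_contra h
    push_neg at h
    have hp : p12 = p02 := Prod.ext (Fin.ext h.1) (Fin.ext h.2)
    have : f s((1 : Fin 3), (2 : Fin 3)) = f s((0 : Fin 3), (2 : Fin 3)) := by
      rw [← hp12, ← hp02, hp]
    exact absurd (hfinj he12 he02 this) (by decide)
  exact main_arith (2 * m) p01.1 p01.2 p12.1 p12.2 p02.1 p02.2
    (code m (i 0)) (code m (i 1)) (code m (i 2))
    p01.1.isLt p12.1.isLt p02.1.isLt
    c0_01 c1_01 c1_12 c2_12 c0_02 c2_02
    ne01 ne12 ne02 key0112 key0102 key1202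
end
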